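/- arXiv:2502.04731 — 7 statements merged into one kernel-verified Lean document; each statement's English description precedes it below -/
import Mathlib

section
/- For an odd prime p, the sum over k from 1 to p-1 of ⌊k^p / p⌋ is congruent to (p+1)/2 modulo p. -/
/-!
By Fermat, `p ⌊k^p / p⌋ = k^p - k` for `0 < k < p`, so `p S = ∑ k^p - p (p - 1) / 2`.
Pairing `k` with `p - k`, the binomial theorem gives `(p - k)^p + k^p ≡ p² k^(p-1) ≡ 0 (mod p²)`
for odd `p`, hence `p² ∣ 2 ∑ k^p`. Dividing `p (2S + p - 1) = 2 ∑ k^p` by `p` yields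
`2S ≡ 1 (mod p)`, i.e. `S ≡ (p + 1)/2`.
-/

open Finset

theorem Nat.Prime.mul_floor_pow_div_self {p k : ℕ} (hp : p.Prime) (hk : k < p) :
    (p : ℤ) * ⌊(k : ℚ) ^ p / p⌋ = (k : ℤ) ^ p - k := by
  have := Fact.mk hp
  have hfermat : (k : ℤ) ^ p % p = k := by
    have : (((k : ℤ) ^ p : ℤ) : ZMod p) = ((k : ℤ) : ZMod p) := by
      push_cast; exact ZMod.pow_card _
    rw [(ZMod.intCast_eq_intCast_iff' _ _ p).mp this]
    exact Int.emod_eq_of_lt k.cast_nonneg (by exact_mod_cast hk)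
  rw [← Int.cast_natCast (R := ℚ) k, ← Int.cast_pow, Rat.floor_intCast_div_natCast]
  linarith [Int.mul_ediv_add_emod ((k : ℤ) ^ p) p]

theorem sq_dvd_sub_pow_add_pow_sub {R : Type*} [CommRing R] {n : ℕ} (hn : Odd n) (a k : R) :
    a ^ 2 ∣ (a - k) ^ n + k ^ n - k ^ (n - 1) * a * n := by
  have h := sq_dvd_add_pow_sub_sub a (-k) n
  rw [hn.neg_pow, (Nat.Odd.sub_odd hn odd_one).neg_pow] at h
  convert h using 1
  ring

theorem Odd.sq_dvd_two_mul_sum_Ico_pow {n : ℕ} (hn : Odd n) :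
    (n : ℤ) ^ 2 ∣ 2 * ∑ k ∈ Ico 1 n, (k : ℤ) ^ n := by
  have hreflect : ∑ k ∈ Ico 1 n, ((n : ℤ) - k) ^ n = ∑ k ∈ Ico 1 n, (k : ℤ) ^ n := calc
    _ = ∑ k ∈ Ico 1 n, (((n - k : ℕ) : ℤ)) ^ n :=
      sum_congr rfl fun k hk => by rw [Nat.cast_sub (mem_Ico.1 hk).2.le]
    _ = _ := by
      rw [sum_Ico_reflect (fun k => (k : ℤ) ^ n) 1 (Nat.le_succ n), Nat.add_sub_cancel_left,
        Nat.add_sub_cancel]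
  have hpair (k : ℤ) : (n : ℤ) ^ 2 ∣ ((n : ℤ) - k) ^ n + k ^ n := by
    have h := dvd_add (sq_dvd_sub_pow_add_pow_sub hn (n : ℤ) k)
      (show (n : ℤ) ^ 2 ∣ k ^ (n - 1) * n * n from ⟨k ^ (n - 1), by ring⟩)
    rwa [sub_add_cancel] at h
  have hsum : 2 * ∑ k ∈ Ico 1 n, (k : ℤ) ^ n = ∑ k ∈ Ico 1 n, (((n : ℤ) - k) ^ n + k ^ n) := by
    rw [sum_add_distrib, hreflect, two_mul]
  rw [hsum]
  exact dvd_sum fun k _ => hpair k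

theorem two_mul_sum_Ico_one_id (n : ℕ) : 2 * ∑ k ∈ Ico 1 n, (k : ℤ) = n * (n - 1) := by
  rcases n.eq_zero_or_pos with rfl | hn
  · simp
  have h := congrArg (Nat.cast : ℕ → ℤ) (sum_range_id_mul_two n)
  push_cast [Nat.cast_sub hn] at h
  rw [range_eq_Ico, sum_eq_sum_Ico_succ_bot hn, Nat.cast_zero, zero_add] at h
  linarith

theorem Int.modEq_add_one_div_two_of_dvd {p s : ℤ} (hp : Odd p) (h : p ∣ 2 * s + p - 1) :
    s ≡ (p + 1) / 2 [ZMOD p] := by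
  have hp' := hp
  obtain ⟨m, rfl⟩ := hp'
  have hhalf : (2 * m + 1 + 1) / 2 = m + 1 := by omega
  rw [hhalf, Int.modEq_iff_dvd]
  have h2 : 2 * m + 1 ∣ 2 * (m + 1 - s) := by
    have hrw : 2 * (m + 1 - s) = 2 * (2 * m + 1) - (2 * s + (2 * m + 1) - 1) := by ring
    rw [hrw]
    exact dvd_sub (dvd_mul_left _ _) h
  exact (Int.isCoprime_two_right.mpr hp).dvd_of_dvd_mul_left h2

theorem stmt_5 (p : ℕ) (hp : p.Prime) (hodd : Odd p) :
    (∑ k ∈ Finset.Icc 1 (p - 1), ⌊(k : ℚ) ^ p / (p : ℚ)⌋) ≡ ((p : ℤ) + 1) / 2 [ZMOD (p : ℤ)] := by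
  have hIco : Icc 1 (p - 1) = Ico 1 p := by ext k; simp only [mem_Icc, mem_Ico]; omega
  rw [hIco]
  set S := ∑ k ∈ Ico 1 p, ⌊(k : ℚ) ^ p / (p : ℚ)⌋
  have hS : (p : ℤ) * S = ∑ k ∈ Ico 1 p, (k : ℤ) ^ p - ∑ k ∈ Ico 1 p, (k : ℤ) := by
    rw [mul_sum, ← sum_sub_distrib]
    exact sum_congr rfl fun k hk => hp.mul_floor_pow_div_self (mem_Ico.1 hk).2
  have hkey : (p : ℤ) * (2 * S + p - 1) = 2 * ∑ k ∈ Ico 1 p, (k : ℤ) ^ p := by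
    linear_combination 2 * hS - two_mul_sum_Ico_one_id p
  have hdvd : (p : ℤ) ∣ 2 * S + p - 1 := by
    rw [← mul_dvd_mul_iff_left (Int.natCast_ne_zero.mpr hp.ne_zero), ← sq, hkey]
    exact hodd.sq_dvd_two_mul_sum_Ico_pow
  exact Int.modEq_add_one_div_two_of_dvd (by exact_mod_cast hodd) hdvd
end

section
/- For an odd prime p ≥ 5, the sum over k from 1 to p-2 of ⌊k^p / p⌋ is congruent to (3-p)/2 modulo p, i.e., 2·∑_{k=1}^{p-2} ⌊k^p/p⌋ ≡ 3 - p (mod p). -/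
open Finset

private lemma sq_dvd_pair (p : ℕ) (hodd : Odd p) (k : ℕ) :
    ((p : ℤ))^2 ∣ (k : ℤ)^p + ((p : ℤ) - k)^p := by
  have h : ((p : ℤ)) ∣ ((p : ℤ) - k) - (-(k : ℤ)) := by
    have : ((p : ℤ) - k) - (-(k : ℤ)) = p := by ring
    rw [this]
  have h2 := dvd_sub_pow_of_dvd_sub h 1
  simp only [pow_one] at h2
  rw [hodd.neg_pow, sub_neg_eq_add] at h2
  have h3 : (1:ℕ) + 1 = 2 := rfl
  rw [h3] at h2
  simpa [add_comm] using h2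

private lemma refl_sum (p n : ℕ) :
    ∑ k ∈ Finset.Icc 1 (p - 1), ((p : ℤ) - k)^n
      = ∑ k ∈ Finset.Icc 1 (p - 1), (k : ℤ)^n := by
  apply Finset.sum_nbij' (i := fun k => p - k) (j := fun k => p - k)
  · intro a ha; simp only [Finset.mem_Icc] at *; omega
  · intro a ha; simp only [Finset.mem_Icc] at *; omega
  · intro a ha; simp only [Finset.mem_Icc] at ha; omega
  · intro a ha; simp only [Finset.mem_Icc] at ha; omega
  · intro a ha
    simp only [Finset.mem_Icc] at ha
    have h1 : 1 ≤ a := ha.1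
    have h2 : a ≤ p - 1 := ha.2
    have hcast : ((p - a : ℕ) : ℤ) = (p : ℤ) - a := by
      have hap : a ≤ p := by omega
      push_cast [Nat.cast_sub hap]; ring
    rw [hcast]

theorem stmt_6 (p : ℕ) (hp : p.Prime) (hodd : Odd p) (h5 : 5 ≤ p) :
    2 * (∑ k ∈ Finset.Icc 1 (p - 2), ⌊(k : ℚ) ^ p / (p : ℚ)⌋) ≡ 3 - (p : ℤ) [ZMOD (p : ℤ)] := by
  have hp0 : (0 : ℤ) < p := by positivity
  -- Fermat: p ∣ k^p - k
  have fermat : ∀ k : ℕ, (p : ℤ) ∣ (k : ℤ)^p - k := by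
    intro k
    haveI : Fact p.Prime := ⟨hp⟩
    have : (((k : ℤ)^p - k : ℤ) : ZMod p) = 0 := by
      push_cast
      rw [ZMod.pow_card]
      ring
    exact_mod_cast (ZMod.intCast_zmod_eq_zero_iff_dvd _ p).mp this
  -- floor formula
  have hfloor : ∀ k ∈ Finset.Icc 1 (p - 2),
      ⌊(k : ℚ) ^ p / (p : ℚ)⌋ = ((k : ℤ)^p - k) / p := by
    intro k hk
    simp only [Finset.mem_Icc] at hk
    have hkp : (k : ℤ) < p := by
      have := hk.2
      have : k < p := by omega
      exact_mod_cast this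
    have hk0 : (0 : ℤ) ≤ k := by positivity
    have hq : ((k : ℚ))^p / (p : ℚ) = (((k:ℤ)^p : ℤ) : ℚ) / ((p : ℕ) : ℚ) := by
      push_cast; ring
    rw [hq, Rat.floor_intCast_div_natCast]
    obtain ⟨m, hm⟩ := fermat k
    have hkpow : (k : ℤ)^p = k + p * m := by linarith [hm]
    rw [hkpow, Int.add_mul_ediv_left _ _ (ne_of_gt hp0),
      Int.ediv_eq_zero_of_lt hk0 hkp]
    have h3 : (k : ℤ) + p * m - k = p * m := by ring
    rw [h3, Int.mul_ediv_cancel_left _ (ne_of_gt hp0)]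
    simp
  rw [Finset.sum_congr rfl hfloor]
  set S := ∑ k ∈ Finset.Icc 1 (p - 2), ((k : ℤ)^p - k) / p with hS
  have hpS : (p : ℤ) * S = ∑ k ∈ Finset.Icc 1 (p - 2), ((k : ℤ)^p - k) := by
    rw [hS, Finset.mul_sum]
    exact Finset.sum_congr rfl fun k _ => Int.mul_ediv_cancel' (fermat k)
  set T := ∑ k ∈ Finset.Icc 1 (p - 2), ((k : ℤ)^p - k) with hT
  set A := ∑ k ∈ Finset.Icc 1 (p - 1), (k : ℤ)^p with hA
  set B := ∑ k ∈ Finset.Icc 1 (p - 1), (k : ℤ) with hB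
  set P := ∑ k ∈ Finset.Icc 1 (p - 1), ((k : ℤ)^p + ((p : ℤ) - k)^p) with hP
  have hA2 : 2 * A = P := by
    rw [hA, hP, Finset.sum_add_distrib, refl_sum p p]; ring
  have hB2 : 2 * B = (p : ℤ) * (p - 1) := by
    have : 2 * B = ∑ k ∈ Finset.Icc 1 (p - 1), ((k : ℤ) + ((p : ℤ) - k)) := by
      rw [Finset.sum_add_distrib]
      have := refl_sum p 1
      simp only [pow_one] at this
      rw [hB, this]; ring
    rw [this]
    have hc2 : ∑ k ∈ Finset.Icc 1 (p - 1), ((k : ℤ) + ((p : ℤ) - k))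
        = ∑ _k ∈ Finset.Icc 1 (p - 1), (p : ℤ) :=
      Finset.sum_congr rfl fun k _ => by ring
    rw [hc2, Finset.sum_const, Nat.card_Icc]
    have : p - 1 + 1 - 1 = p - 1 := by omega
    rw [this]
    have hc : ((p - 1 : ℕ) : ℤ) = (p : ℤ) - 1 := by
      have : (1:ℕ) ≤ p := by omega
      push_cast [Nat.cast_sub this]; ring
    rw [nsmul_eq_mul, hc]; ring
  have hPdvd : ((p : ℤ))^2 ∣ P := Finset.dvd_sum fun k _ => sq_dvd_pair p hodd k
  have hlast : ((p : ℤ))^2 ∣ ((p : ℤ) - 1)^p + 1 := by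
    have h := sq_dvd_pair p hodd 1
    simpa [add_comm] using h
  -- split off top term: Icc 1 (p-1) = Icc 1 (p-2) plus p-1
  have hsplit : ∀ f : ℕ → ℤ, ∑ k ∈ Finset.Icc 1 (p - 1), f k
      = (∑ k ∈ Finset.Icc 1 (p - 2), f k) + f (p - 1) := by
    intro f
    have h1 : p - 1 = (p - 2) + 1 := by omega
    rw [h1, Finset.sum_Icc_succ_top (by omega)]
  have hcast1 : ((p - 1 : ℕ) : ℤ) = (p : ℤ) - 1 := by
    have : (1:ℕ) ≤ p := by omega
    push_cast [Nat.cast_sub this]; ring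
  have hTA : T = A - ((p:ℤ) - 1)^p - (B - ((p:ℤ) - 1)) := by
    have hAe := hsplit (fun k => (k : ℤ)^p)
    have hBe := hsplit (fun k => (k : ℤ))
    simp only [hcast1] at hAe hBe
    rw [← hA] at hAe
    rw [← hB] at hBe
    rw [hT, Finset.sum_sub_distrib]
    linarith [hAe, hBe]
  -- key divisibility
  have hkey : ((p : ℤ))^2 ∣ (3 - (p:ℤ)) * p - 2 * T := by
    have heq : (3 - (p:ℤ)) * p - 2 * T
        = 2 * (((p:ℤ) - 1)^p + 1) - P := by
      rw [hTA]
      have : (3 - (p:ℤ)) * p - 2 * (A - ((p:ℤ) - 1)^p - (B - ((p:ℤ) - 1)))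
          = 2 * (((p:ℤ) - 1)^p + 1) - 2 * A + (2 * B - (p:ℤ)*((p:ℤ)-1)) := by
        ring
      rw [this, hA2, hB2]; ring
    rw [heq]
    exact dvd_sub (Dvd.dvd.mul_left hlast 2) hPdvd
  -- conclude mod p
  have hfinal : (p : ℤ) ∣ (3 - (p:ℤ)) - 2 * S := by
    have h1 : (p:ℤ) * ((3 - (p:ℤ)) - 2 * S) = (3 - (p:ℤ)) * p - 2 * T := by
      rw [← hpS]; ring
    have h2 : (p:ℤ) * (p:ℤ) ∣ (p:ℤ) * ((3 - (p:ℤ)) - 2 * S) := by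
      rw [h1]; rwa [sq] at hkey
    exact (mul_dvd_mul_iff_left (ne_of_gt hp0)).mp h2
  exact Int.modEq_iff_dvd.mpr hfinal
end

section
/- For an odd prime p and an integer r with 1 ≤ r ≤ p, the sum ∑_{k=1}^{p-r} (k^p - k) is congruent modulo p^2 to (B_{p+1}(r) - B_{p+1}(0))/(p+1) - (1+p-r)(p-r)/2, where B_{p+1}(x) is the (p+1)-st Bernoulli polynomial. -/
/-!
By Faulhaber's formula the Bernoulli term is `∑_{k<r} k^p`, and Gauss's formula cancels the
linear part, so the claim is that `p²` divides `∑_{k ≤ p-r} k^p - ∑_{k<r} k^p`. Up to sign this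
is a sum of `k^p` over an interval of `ℕ` that is symmetric under `k ↦ p - k`, and for odd `p`
each pair satisfies `k^p + (p - k)^p ≡ 0 [mod p²]`, as `(p - k)^p ≡ (-k)^p` modulo `p²`.
-/

open Finset

theorem sq_dvd_pow_add_sub_pow {R : Type*} [CommRing R] {n : ℕ} (hn : Odd n) (x : R) :
    (n : R) ^ 2 ∣ x ^ n + (n - x) ^ n := by
  have h := dvd_sub_pow_of_dvd_sub (p := n) (a := n - x) (b := -x) (by simp) 1
  rw [pow_one, hn.neg_pow, sub_neg_eq_add] at h
  rw [add_comm]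
  simpa using h

theorem sq_dvd_sum_Ico_pow {n a b : ℕ} (hn : Odd n) (hab : a + b = n + 1) :
    (n : ℤ) ^ 2 ∣ ∑ k ∈ Ico b a, (k : ℤ) ^ n := by
  have hreflect : ∑ k ∈ Ico b a, ((n - k : ℕ) : ℤ) ^ n = ∑ k ∈ Ico b a, (k : ℤ) ^ n := by
    rw [sum_Ico_reflect (fun k => (k : ℤ) ^ n) b (n := n) (by omega),
      show n + 1 - a = b by omega, show n + 1 - b = a by omega]
  have htwice : (n : ℤ) ^ 2 ∣ 2 * ∑ k ∈ Ico b a, (k : ℤ) ^ n := by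
    rw [two_mul]
    nth_rw 2 [← hreflect]
    rw [← sum_add_distrib]
    refine dvd_sum fun k hk => ?_
    rw [Nat.cast_sub (by simp at hk; omega)]
    exact sq_dvd_pow_add_sub_pow hn _
  have hcop : IsCoprime ((n : ℤ) ^ 2) 2 :=
    (Nat.isCoprime_iff_coprime.mpr (Nat.coprime_two_right.mpr hn)).pow_left
  exact hcop.dvd_of_dvd_mul_left htwice

theorem sq_dvd_sum_range_pow_sub {n a b : ℕ} (hn : Odd n) (hab : a + b = n + 1) :
    (n : ℤ) ^ 2 ∣ ∑ k ∈ range a, (k : ℤ) ^ n - ∑ k ∈ range b, (k : ℤ) ^ n := by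
  rcases le_total b a with hba | hab'
  · rw [← sum_Ico_eq_sub _ hba]
    exact sq_dvd_sum_Ico_pow hn hab
  · rw [← neg_sub, dvd_neg, ← sum_Ico_eq_sub _ hab']
    exact sq_dvd_sum_Ico_pow hn (by omega)

theorem sum_Icc_one_eq_sum_range {M : Type*} [AddCommMonoid M] {f : ℕ → M} (hf : f 0 = 0)
    (n : ℕ) : ∑ k ∈ Icc 1 n, f k = ∑ k ∈ range (n + 1), f k := by
  rw [range_eq_Ico, sum_eq_sum_Ico_succ_bot n.succ_pos, hf, zero_add]
  rfl

theorem sum_range_succ_natCast {K : Type*} [Field K] [CharZero K] (n : ℕ) :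
    ∑ k ∈ range (n + 1), (k : K) = (1 + n) * n / 2 := by
  have h := congrArg (Nat.cast : ℕ → K) (sum_range_id_mul_two (n + 1))
  push_cast [Nat.add_sub_cancel] at h
  rw [eq_div_iff two_ne_zero, h]
  ring

theorem stmt_7_general (p : ℕ) (hodd : Odd p) (r : ℕ) (h2 : r ≤ p) :
    ∃ m : ℤ, (∑ k ∈ Finset.Icc 1 (p - r), ((k : ℚ) ^ p - (k : ℚ)))
      - ((((Polynomial.bernoulli (p + 1)).eval (r : ℚ)
            - (Polynomial.bernoulli (p + 1)).eval 0) / ((p : ℚ) + 1))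
          - (1 + (p : ℚ) - r) * ((p : ℚ) - r) / 2)
      = ((p : ℚ) ^ 2) * (m : ℚ) := by
  obtain ⟨m, hm⟩ := sq_dvd_sum_range_pow_sub hodd (a := p - r + 1) (b := r) (by omega)
  refine ⟨m, ?_⟩
  have hfaulhaber : ((Polynomial.bernoulli (p + 1)).eval (r : ℚ)
      - (Polynomial.bernoulli (p + 1)).eval 0) / ((p : ℚ) + 1) = ∑ k ∈ range r, (k : ℚ) ^ p := by
    rw [div_eq_iff (by positivity), mul_comm, Polynomial.sum_range_pow_eq_bernoulli_sub,
      Polynomial.bernoulli_eval_zero]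
  have hgauss : ∑ k ∈ Icc 1 (p - r), ((k : ℚ) ^ p - k)
      = ∑ k ∈ range (p - r + 1), (k : ℚ) ^ p - (1 + ((p - r : ℕ) : ℚ)) * (p - r : ℕ) / 2 := by
    rw [sum_Icc_one_eq_sum_range (by simp [hodd.pos.ne']), sum_sub_distrib,
      sum_range_succ_natCast]
  have hmℚ := congrArg (fun z : ℤ => (z : ℚ)) hm
  push_cast at hmℚ
  rw [hfaulhaber, hgauss, Nat.cast_sub h2]
  linear_combination hmℚ

theorem stmt_7 (p : ℕ) (hp : p.Prime) (hodd : Odd p) (r : ℕ) (h1 : 1 ≤ r) (h2 : r ≤ p) :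
    ∃ m : ℤ, (∑ k ∈ Finset.Icc 1 (p - r), ((k : ℚ) ^ p - (k : ℚ)))
      - ((((Polynomial.bernoulli (p + 1)).eval (r : ℚ)
            - (Polynomial.bernoulli (p + 1)).eval 0) / ((p : ℚ) + 1))
          - (1 + (p : ℚ) - r) * ((p : ℚ) - r) / 2)
      = ((p : ℚ) ^ 2) * (m : ℚ) :=
  stmt_7_general p hodd r h2
end

section
/- For an odd prime p and an integer r with 1 ≤ r ≤ p, the sum ∑_{k=1}^{p-r} ⌊k^p / p⌋ is congruent modulo p to (B_{p+1}(r) - B_{p+1}(0))/(p(p+1)) + (r-1-p)(p-r)/(2p), interpreted as: p·(p+1)·2·∑_{k=1}^{p-r} ⌊k^p/p⌋ ≡ 2(B_{p+1}(r) - B_{p+1}(0)) + (p+1)(r-1-p)(p-r) (mod 2p^2(p+1)). -/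
open Finset Polynomial

-- pairing lemma
lemma pair_dvd (p : ℕ) (hodd : Odd p) (j : ℕ) :
    ((p:ℤ))^2 ∣ (j:ℤ)^p + ((p:ℤ) - j)^p := by
  have h : ((p:ℕ):ℤ) ∣ ((p:ℤ) - j) - (-(j:ℤ)) := ⟨1, by ring⟩
  have h2 := dvd_sub_pow_of_dvd_sub h 1
  simp only [pow_one] at h2
  rw [hodd.neg_pow, sub_neg_eq_add] at h2
  have : (j:ℤ)^p + ((p:ℤ) - j)^p = ((p:ℤ) - j)^p + (j:ℤ)^p := by ring
  rwa [this]

lemma keyD (p r : ℕ) (hp : p.Prime) (hodd : Odd p) (h2 : r ≤ p) :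
    ((p:ℤ))^2 ∣ (∑ k ∈ range (p - r + 1), (k:ℤ)^p) - ∑ k ∈ range r, (k:ℤ)^p := by
  set n := p - r with hn
  -- full reflection : sum over range (p+1) of (p - j)^p equals sum of j^p
  have hfull : ∑ j ∈ range (p+1), ((p:ℤ) - j)^p = ∑ j ∈ range (p+1), (j:ℤ)^p := by
    rw [← Finset.sum_range_reflect (fun j => ((p:ℤ) - j)^p) (p+1)]
    apply Finset.sum_congr rfl
    intro j hj
    have hj' : j ≤ p := by simpa using Nat.lt_succ_iff.mp (Finset.mem_range.mp hj)
    have : ((p + 1 - 1 - j : ℕ) : ℤ) = (p:ℤ) - j := by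
      simp only [Nat.add_sub_cancel]
      push_cast [Nat.cast_sub hj']
      ring
    rw [this]; ring
  have hAfull : ((p:ℤ))^2 ∣ ∑ j ∈ range (p+1), (j:ℤ)^p := by
    have hQ : ((p:ℤ))^2 ∣ ∑ j ∈ range (p+1), ((j:ℤ)^p + ((p:ℤ) - j)^p) :=
      Finset.dvd_sum (fun j _ => pair_dvd p hodd j)
    rw [Finset.sum_add_distrib, hfull, ← two_mul] at hQ
    have hcop : IsCoprime ((p:ℤ)^2) (2:ℤ) := by
      have : IsCoprime (2:ℤ) ((p^2 : ℕ):ℤ) :=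
        Nat.Coprime.isCoprime (Nat.Coprime.pow_right 2 (Odd.coprime_two_left hodd))
      push_cast at this
      exact this.symm
    exact hcop.dvd_of_dvd_mul_left hQ
  -- reflection on range (n+1)
  have hrefl : ∑ j ∈ range (n+1), ((p:ℤ) - j)^p
      = (∑ k ∈ range (p+1), (k:ℤ)^p) - ∑ k ∈ range r, (k:ℤ)^p := by
    have e1 : ∑ j ∈ range (n+1), ((p:ℤ) - j)^p = ∑ j ∈ range (n+1), ((r + j : ℕ):ℤ)^p := by
      rw [← Finset.sum_range_reflect (fun j => ((p:ℤ) - j)^p) (n+1)]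
      apply Finset.sum_congr rfl
      intro j hj
      have hj' : j ≤ n := Nat.lt_succ_iff.mp (Finset.mem_range.mp hj)
      have hcast : ((n + 1 - 1 - j : ℕ) : ℤ) = (n:ℤ) - j := by
        simp only [Nat.add_sub_cancel]
        push_cast [Nat.cast_sub hj']
        ring
      have hnr : (n:ℤ) = (p:ℤ) - r := by
        rw [hn]; push_cast [Nat.cast_sub h2]; ring
      rw [hcast]
      have : (p:ℤ) - ((n:ℤ) - j) = ((r + j : ℕ):ℤ) := by push_cast; rw [hnr]; ring
      rw [this]
    have e2 : ∑ j ∈ range (n+1), ((r + j : ℕ):ℤ)^p = ∑ k ∈ Ico r (p+1), (k:ℤ)^p := by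
      rw [Finset.sum_Ico_eq_sum_range]
      have : p + 1 - r = n + 1 := by omega
      rw [this]
    rw [e1, e2, Finset.sum_Ico_eq_sub _ (by omega : r ≤ p+1)]
  have hQ2 : ((p:ℤ))^2 ∣ ∑ j ∈ range (n+1), ((j:ℤ)^p + ((p:ℤ) - j)^p) :=
    Finset.dvd_sum (fun j _ => pair_dvd p hodd j)
  rw [Finset.sum_add_distrib, hrefl] at hQ2
  have : (∑ k ∈ range (n + 1), (k:ℤ)^p) - ∑ k ∈ range r, (k:ℤ)^p
      = ((∑ j ∈ range (n+1), (j:ℤ)^p) + ((∑ k ∈ range (p+1), (k:ℤ)^p) - ∑ k ∈ range r, (k:ℤ)^p))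
        - ∑ k ∈ range (p+1), (k:ℤ)^p := by ring
  rw [this]
  exact dvd_sub hQ2 hAfull


theorem stmt_8 (p : ℕ) (hp : p.Prime) (hodd : Odd p) (r : ℕ) (h1 : 1 ≤ r) (h2 : r ≤ p) :
    ∃ m : ℤ, ((p : ℚ) * ((p : ℚ) + 1) * 2 *
        ((∑ k ∈ Finset.Icc 1 (p - r), ⌊(k : ℚ) ^ p / (p : ℚ)⌋ : ℤ) : ℚ))
      - (2 * ((Polynomial.bernoulli (p + 1)).eval (r : ℚ)
              - (Polynomial.bernoulli (p + 1)).eval 0)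
          + ((p : ℚ) + 1) * ((r : ℚ) - 1 - p) * ((p : ℚ) - r))
      = 2 * (p : ℚ) ^ 2 * ((p : ℚ) + 1) * (m : ℚ) := by
  haveI : Fact p.Prime := ⟨hp⟩
  set n := p - r with hn
  have hp0 : (0:ℚ) < p := by exact_mod_cast hp.pos
  have hppos : 0 < p := hp.pos
  -- Fermat little theorem divisibility
  have hdvd : ∀ k : ℕ, (p:ℤ) ∣ (k:ℤ)^p - k := by
    intro k
    have : (((k:ℤ)^p - k : ℤ) : ZMod p) = 0 := by
      push_cast
      rw [ZMod.pow_card]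
      ring
    exact (ZMod.intCast_zmod_eq_zero_iff_dvd _ p).mp this
  -- floor identity
  have key : ∀ k ∈ Finset.Icc 1 n, (p:ℤ) * ⌊(k : ℚ) ^ p / (p : ℚ)⌋ = (k:ℤ)^p - k := by
    intro k hk
    obtain ⟨hk1, hk2⟩ := Finset.mem_Icc.mp hk
    have hkp : k < p := by omega
    obtain ⟨c, hc⟩ := hdvd k
    have hkq : (k:ℚ)^p - k = p * c := by exact_mod_cast congrArg (Int.cast : ℤ → ℚ) hc
    have hx : (k:ℚ)^p / p = c + k / p := by
      field_simp
      linarith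
    have hfl : ⌊(k:ℚ)^p / p⌋ = c := by
      rw [hx, add_comm, Int.floor_add_intCast]
      have : ⌊(k:ℚ)/p⌋ = 0 := by
        rw [Int.floor_eq_zero_iff]
        constructor
        · positivity
        · rw [div_lt_one hp0]; exact_mod_cast hkp
      rw [this, zero_add]
    rw [hfl, hc]
  -- sum identity over ℤ
  have hsum : (p:ℤ) * ∑ k ∈ Finset.Icc 1 n, ⌊(k : ℚ) ^ p / (p : ℚ)⌋
      = (∑ k ∈ Finset.Icc 1 n, (k:ℤ)^p) - ∑ k ∈ Finset.Icc 1 n, (k:ℤ) := by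
    rw [Finset.mul_sum, ← Finset.sum_sub_distrib]
    exact Finset.sum_congr rfl key
  -- Icc 1 n to range (n+1) for powers
  have hIcc : ∀ f : ℕ → ℚ, f 0 = 0 → ∑ k ∈ Finset.Icc 1 n, f k = ∑ k ∈ Finset.range (n+1), f k := by
    intro f hf
    rw [Finset.range_eq_Ico, Finset.sum_eq_sum_Ico_succ_bot (by omega), hf, zero_add,
      ← Finset.Ico_add_one_right_eq_Icc]
  -- Gauss
  have hU : (∑ k ∈ Finset.Icc 1 n, (k:ℚ)) * 2 = (n:ℚ) * (n + 1) := by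
    have h' : ∑ k ∈ Finset.Icc 1 n, (k:ℚ) = ∑ k ∈ Finset.range (n+1), (k:ℚ) := by
      apply hIcc; norm_num
    rw [h']
    have hnat : (∑ i ∈ Finset.range (n+1), i) * 2 = (n+1) * n := by
      simpa using Finset.sum_range_id_mul_two (n+1)
    have hq := congrArg (fun x : ℕ => (x:ℚ)) hnat
    push_cast at hq
    linarith [hq]
  -- Bernoulli
  have hB : (Polynomial.bernoulli (p + 1)).eval (r : ℚ) - (Polynomial.bernoulli (p + 1)).eval 0
      = ((p:ℚ) + 1) * ∑ k ∈ Finset.range r, (k:ℚ)^p := by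
    rw [Polynomial.bernoulli_eval_zero]
    have := Polynomial.bernoulli_succ_eval r p
    rw [Nat.succ_eq_add_one] at this
    rw [this]
    push_cast
    ring
  -- divisibility
  obtain ⟨m, hm⟩ := keyD p r hp hodd h2
  refine ⟨m, ?_⟩
  have hD : (∑ k ∈ Finset.range (n+1), (k:ℚ)^p) - (∑ k ∈ Finset.range r, (k:ℚ)^p)
      = (p:ℚ)^2 * m := by
    have := congrArg (Int.cast : ℤ → ℚ) hm
    push_cast at this
    rw [← hn] at this
    exact this
  have hT : ∑ k ∈ Finset.Icc 1 n, (k:ℚ)^p = ∑ k ∈ Finset.range (n+1), (k:ℚ)^p := by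
    apply hIcc
    exact zero_pow (by omega)
  -- cast of hsum to ℚ
  have hsumQ : (p:ℚ) * ((∑ k ∈ Finset.Icc 1 n, ⌊(k : ℚ) ^ p / (p : ℚ)⌋ : ℤ) : ℚ)
      = (∑ k ∈ Finset.Icc 1 n, (k:ℚ)^p) - ∑ k ∈ Finset.Icc 1 n, (k:ℚ) := by
    have := congrArg (Int.cast : ℤ → ℚ) hsum
    push_cast at this
    exact_mod_cast this
  have hc1 : (p:ℚ) - r = (n:ℚ) := by
    rw [hn]; push_cast [Nat.cast_sub h2]; ring
  have hc2 : (r:ℚ) - 1 - p = -((n:ℚ) + 1) := by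
    rw [hn]; push_cast [Nat.cast_sub h2]; ring
  rw [hB, hc1, hc2]
  linear_combination 2*((p:ℚ)+1)*hsumQ - ((p:ℚ)+1)*hU + 2*((p:ℚ)+1)*hD + 2*((p:ℚ)+1)*hT
end

section
/- For an odd prime p and natural number r with 1 ≤ r ≤ p, ∑_{k=1}^{p-r} k^p ≡ ∑_{k=1}^{r-1} k^p (mod p^2). -/
lemma key_pow (p : ℕ) (hodd : Odd p) (a : ℤ) :
    ((p : ℤ) - a) ^ p + a ^ p ≡ 0 [ZMOD ((p : ℤ) ^ 2)] := by
  have h : (p : ℤ) ∣ ((p : ℤ) - a) - (-a) := ⟨1, by ring⟩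
  have h2 := dvd_sub_pow_of_dvd_sub h 1
  have hneg : (-a) ^ p = -(a ^ p) := hodd.neg_pow a
  rw [pow_one, hneg, sub_neg_eq_add] at h2
  exact (Int.modEq_zero_iff_dvd.mpr (by simpa using h2))

lemma half_case (p : ℕ) (hp : p.Prime) (hodd : Odd p) :
    ∀ d, d ≤ (p - 1) / 2 →
      (∑ k ∈ Finset.Icc 1 (p - ((p + 1) / 2 + d)), (k : ℤ) ^ p) ≡
        (∑ k ∈ Finset.Icc 1 (((p + 1) / 2 + d) - 1), (k : ℤ) ^ p) [ZMOD ((p : ℤ) ^ 2)] := by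
  obtain ⟨m, hm⟩ := id hodd
  intro d hd
  induction d with
  | zero =>
      have : p - ((p + 1) / 2 + 0) = ((p + 1) / 2 + 0) - 1 := by omega
      rw [this]
  | succ d ih =>
      have hd' : d ≤ (p - 1) / 2 := by omega
      have ih := ih hd'
      set r := (p + 1) / 2 + d with hr
      have hr1 : 1 ≤ r := by omega
      have hrp : r + 1 ≤ p := by omega
      have hcast : ((p - r : ℕ) : ℤ) = (p : ℤ) - (r : ℤ) := by
        push_cast [Nat.cast_sub (by omega : r ≤ p)]; ring
      have e1 : p - r = (p - (r + 1)) + 1 := by omega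
      have s1 := Finset.sum_Icc_succ_top (a := 1) (b := p - (r + 1)) (by omega)
        (fun k : ℕ => (k : ℤ) ^ p)
      rw [← e1] at s1
      have e2 : r = (r - 1) + 1 := by omega
      have s2 := Finset.sum_Icc_succ_top (a := 1) (b := r - 1) (by omega)
        (fun k : ℕ => (k : ℤ) ^ p)
      rw [← e2] at s2
      have hk := key_pow p hodd (r : ℤ)
      have hk2 : ((p : ℤ) - r) ^ p ≡ -((r : ℤ) ^ p) [ZMOD ((p : ℤ) ^ 2)] := by
        have := hk.sub_right ((r : ℤ) ^ p)
        simpa using this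
      have eA : (∑ k ∈ Finset.Icc 1 (p - (r + 1)), (k : ℤ) ^ p) =
          (∑ k ∈ Finset.Icc 1 (p - r), (k : ℤ) ^ p) - ((p : ℤ) - r) ^ p := by
        rw [s1]; simp [hcast]
      have eg : (p + 1) / 2 + (d + 1) = r + 1 := by omega
      have e3 : (r + 1) - 1 = r := by omega
      rw [eg, e3]
      calc (∑ k ∈ Finset.Icc 1 (p - (r + 1)), (k : ℤ) ^ p)
          = (∑ k ∈ Finset.Icc 1 (p - r), (k : ℤ) ^ p) - ((p : ℤ) - r) ^ p := eA
        _ ≡ (∑ k ∈ Finset.Icc 1 (r - 1), (k : ℤ) ^ p) - (-((r : ℤ) ^ p))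
            [ZMOD ((p : ℤ) ^ 2)] := ih.sub hk2
        _ = (∑ k ∈ Finset.Icc 1 r, (k : ℤ) ^ p) := by rw [s2]; ring

theorem stmt_9 (p : ℕ) (hp : p.Prime) (hodd : Odd p) (r : ℕ) (h1 : 1 ≤ r) (h2 : r ≤ p) :
    (∑ k ∈ Finset.Icc 1 (p - r), (k : ℤ) ^ p) ≡
      (∑ k ∈ Finset.Icc 1 (r - 1), (k : ℤ) ^ p) [ZMOD ((p : ℤ) ^ 2)] := by
  obtain ⟨m, hm⟩ := id hodd
  have hp2 : 2 ≤ p := hp.two_le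
  by_cases hc : (p + 1) / 2 ≤ r
  · have h := half_case p hp hodd (r - (p + 1) / 2) (by omega)
    have e : (p + 1) / 2 + (r - (p + 1) / 2) = r := by omega
    rwa [e] at h
  · have h := half_case p hp hodd ((p + 1 - r) - (p + 1) / 2) (by omega)
    have e : (p + 1) / 2 + ((p + 1 - r) - (p + 1) / 2) = p + 1 - r := by omega
    rw [e] at h
    have e1 : p - (p + 1 - r) = r - 1 := by omega
    have e2 : (p + 1 - r) - 1 = p - r := by omega
    rw [e1, e2] at h
    exact h.symm
end

section
/- For any prime p ≥ 7, ∑_{k=1}^{p-1} ⌊k^5 / p⌋ = (1/12)(p-2)(p-1)(p+1)(2p^2 - 2p + 3). -/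
/-!
Write `k ^ 5 = p * (k ^ 5 / p) + k ^ 5 % p` and sum over `1 ≤ k ≤ p - 1`. Since the exponent is
odd, `k ^ 5 + (p - k) ^ 5` is divisible by `p` while neither term is, so the residues of `k` and
`p - k` add up to exactly `p`; hence the residues sum to `p (p - 1) / 2`. Subtracting this from
the classical closed form of `∑ k ^ 5` and dividing by `p` gives the formula.
-/

open Finset

theorem Nat.mod_add_mod_eq_of_dvd_add {a b c : ℕ} (h : c ∣ a + b) (ha : ¬ c ∣ a) :
    a % c + b % c = c := by
  have key := Nat.add_mod_add_ite a b c
  rw [Nat.mod_eq_zero_of_dvd h, zero_add] at key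
  split_ifs at key
  · exact key.symm
  · exact absurd (Nat.dvd_of_mod_eq_zero (by omega)) ha

theorem Nat.Prime.pow_mod_add_sub_pow_mod {p n k : ℕ} (hp : p.Prime) (hn : Odd n)
    (hk₀ : 0 < k) (hkp : k < p) : k ^ n % p + (p - k) ^ n % p = p := by
  refine Nat.mod_add_mod_eq_of_dvd_add ?_ fun h => ?_
  · simpa [Nat.add_sub_cancel' hkp.le] using hn.nat_add_dvd_pow_add_pow k (p - k)
  · exact absurd (Nat.le_of_dvd hk₀ (hp.dvd_of_dvd_pow h)) (by omega)

theorem Nat.Prime.two_mul_sum_pow_mod {p n : ℕ} (hp : p.Prime) (hn : Odd n) :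
    2 * ∑ k ∈ Icc 1 (p - 1), k ^ n % p = p * (p - 1) := by
  have reflect : ∑ k ∈ Icc 1 (p - 1), (p - k) ^ n % p = ∑ k ∈ Icc 1 (p - 1), k ^ n % p :=
    sum_nbij' (p - ·) (p - ·) (by simp; omega) (by simp; omega) (by simp; omega)
      (by simp; omega) (by simp)
  calc 2 * ∑ k ∈ Icc 1 (p - 1), k ^ n % p
      = ∑ k ∈ Icc 1 (p - 1), (k ^ n % p + (p - k) ^ n % p) := by
        rw [sum_add_distrib, reflect, two_mul]
    _ = ∑ k ∈ Icc 1 (p - 1), p :=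
        sum_congr rfl fun k hk => hp.pow_mod_add_sub_pow_mod hn (by simp at hk; omega)
          (by simp at hk; omega)
    _ = p * (p - 1) := by simp [mul_comm]

-- With `T = n (n + 1)`, this is `∑ k ^ 5 = T ^ 2 (2 T - 1) / 12` without subtraction or division.
theorem sum_Icc_pow_five (n : ℕ) :
    12 * ∑ k ∈ Icc 1 n, k ^ 5 + (n * (n + 1)) ^ 2 = 2 * (n * (n + 1)) ^ 3 := by
  induction n with
  | zero => simp
  | succ n ih =>
    rw [sum_Icc_succ_top (by omega)]
    zify at ih ⊢
    linear_combination ih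

theorem stmt_11_general (p : ℕ) (hp : p.Prime) :
    ∑ k ∈ Finset.Icc 1 (p - 1), k ^ 5 / p
      = (p - 2) * (p - 1) * (p + 1) * (2 * p ^ 2 - 2 * p + 3) / 12 := by
  set S := ∑ k ∈ Icc 1 (p - 1), k ^ 5 / p
  set R := ∑ k ∈ Icc 1 (p - 1), k ^ 5 % p
  have hdivmod : ∑ k ∈ Icc 1 (p - 1), k ^ 5 = p * S + R := by
    rw [mul_sum, ← sum_add_distrib]
    exact sum_congr rfl fun k _ => (Nat.div_add_mod _ _).symm
  have hR : 2 * R = p * (p - 1) := hp.two_mul_sum_pow_mod (by decide)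
  have hpow := sum_Icc_pow_five (p - 1)
  rw [hdivmod] at hpow
  have h12 : 12 * S = (p - 2) * (p - 1) * (p + 1) * (2 * p ^ 2 - 2 * p + 3) := by
    have h2 := hp.two_le
    have hp0 : (p : ℤ) ≠ 0 := by positivity
    zify [h2, (by omega : 1 ≤ p), (by nlinarith : 2 * p ≤ 2 * p ^ 2)] at hpow hR ⊢
    apply mul_left_cancel₀ hp0
    linear_combination hpow - 6 * hR
  rw [← h12, Nat.mul_div_cancel_left _ (by norm_num)]

theorem stmt_11 (p : ℕ) (hp : p.Prime) (h7 : 7 ≤ p) :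
    ∑ k ∈ Finset.Icc 1 (p - 1), k ^ 5 / p
      = (p - 2) * (p - 1) * (p + 1) * (2 * p ^ 2 - 2 * p + 3) / 12 :=
  stmt_11_general p hp
end

section
/- For any prime p ≥ 11, ∑_{k=1}^{p-1} ⌊k^7 / p⌋ = (1/24)(p-2)(p-1)(p+1)(3p^4 - 6p^3 + 5p^2 - 2p + 6). -/
lemma sum7 (n : ℕ) : 24 * ∑ k ∈ Finset.range (n + 1), (k : ℤ) ^ 7 =
    (n : ℤ) ^ 2 * (n + 1) ^ 2 * (3 * n ^ 4 + 6 * n ^ 3 - n ^ 2 - 4 * n + 2) := by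
  induction n with
  | zero => simp
  | succ n ih =>
      rw [Finset.sum_range_succ, mul_add, ih]
      push_cast
      ring

theorem stmt_12 (p : ℕ) (hp : p.Prime) (h11 : 11 ≤ p) :
    ∑ k ∈ Finset.Icc 1 (p - 1), k ^ 7 / p
      = (p - 2) * (p - 1) * (p + 1) * (3 * p ^ 4 - 6 * p ^ 3 + 5 * p ^ 2 - 2 * p + 6) / 24 := by
  have hp0 : (p : ℤ) ≠ 0 := by positivity
  set L := ∑ k ∈ Finset.Icc 1 (p - 1), k ^ 7 / p with hLdef
  set R := ∑ k ∈ Finset.Icc 1 (p - 1), k ^ 7 % p with hRdef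
  -- pairing lemma
  have hpair : ∀ k ∈ Finset.Icc 1 (p - 1), k ^ 7 % p + (p - k) ^ 7 % p = p := by
    intro k hk
    rw [Finset.mem_Icc] at hk
    have hk1 : 1 ≤ k := hk.1
    have hkp : k < p := by omega
    have hdvdZ : (p : ℤ) ∣ (k : ℤ) ^ 7 + ((p : ℤ) - k) ^ 7 := by
      have h1 : ((p : ℤ) - k) - (-(k : ℤ)) ∣ ((p : ℤ) - k) ^ 7 - (-(k : ℤ)) ^ 7 :=
        sub_dvd_pow_sub_pow _ _ 7
      have h2 : ((p : ℤ) - k) - (-(k : ℤ)) = p := by ring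
      have h3 : ((p : ℤ) - k) ^ 7 - (-(k : ℤ)) ^ 7 = ((k : ℤ) ^ 7 + ((p : ℤ) - k) ^ 7) := by
        ring
      rwa [h2, h3] at h1
    have hdvd : p ∣ k ^ 7 + (p - k) ^ 7 := by
      have hc : ((k ^ 7 + (p - k) ^ 7 : ℕ) : ℤ) = (k : ℤ) ^ 7 + ((p : ℤ) - k) ^ 7 := by
        push_cast [Nat.cast_sub hkp.le]
        ring
      have : (p : ℤ) ∣ ((k ^ 7 + (p - k) ^ 7 : ℕ) : ℤ) := by rw [hc]; exact hdvdZ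
      exact_mod_cast this
    have ha : k ^ 7 % p ≠ 0 := by
      intro h
      have h1 : p ∣ k ^ 7 := Nat.dvd_of_mod_eq_zero h
      have h2 : p ∣ k := hp.dvd_of_dvd_pow h1
      have := Nat.le_of_dvd (by omega) h2
      omega
    have hb : (p - k) ^ 7 % p ≠ 0 := by
      intro h
      have h1 : p ∣ (p - k) ^ 7 := Nat.dvd_of_mod_eq_zero h
      have h2 : p ∣ (p - k) := hp.dvd_of_dvd_pow h1
      have := Nat.le_of_dvd (by omega) h2
      omega
    have ha' : k ^ 7 % p < p := Nat.mod_lt _ (by omega)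
    have hb' : (p - k) ^ 7 % p < p := Nat.mod_lt _ (by omega)
    have hdvd2 : p ∣ k ^ 7 % p + (p - k) ^ 7 % p := by
      have hm : (k ^ 7 % p + (p - k) ^ 7 % p) % p = 0 := by
        rw [← Nat.add_mod]
        exact Nat.mod_eq_zero_of_dvd hdvd
      exact Nat.dvd_of_mod_eq_zero hm
    obtain ⟨c, hc⟩ := hdvd2
    match c, hc with
    | 0, hc => omega
    | 1, hc => omega
    | (c + 2), hc =>
      have h2p : p * 2 ≤ p * (c + 2) := Nat.mul_le_mul_left _ (by omega)
      omega
  -- sum of residues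
  have hR2 : 2 * R = p * (p - 1) := by
    have hrefl : ∑ k ∈ Finset.Icc 1 (p - 1), (p - k) ^ 7 % p = R := by
      rw [hRdef]
      apply Finset.sum_nbij' (fun k => p - k) (fun k => p - k)
      · intro a ha; simp only [Finset.mem_Icc] at *; omega
      · intro a ha; simp only [Finset.mem_Icc] at *; omega
      · intro a ha; simp only [Finset.mem_Icc] at ha; omega
      · intro a ha; simp only [Finset.mem_Icc] at ha; omega
      · intro a ha; rfl
    calc 2 * R = R + ∑ k ∈ Finset.Icc 1 (p - 1), (p - k) ^ 7 % p := by rw [hrefl]; ring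
    _ = ∑ k ∈ Finset.Icc 1 (p - 1), (k ^ 7 % p + (p - k) ^ 7 % p) := by
        rw [hRdef, ← Finset.sum_add_distrib]
    _ = ∑ k ∈ Finset.Icc 1 (p - 1), p := Finset.sum_congr rfl hpair
    _ = p * (p - 1) := by
        rw [Finset.sum_const, Nat.card_Icc, smul_eq_mul]
        have h : p - 1 + 1 - 1 = p - 1 := by omega
        rw [h, Nat.mul_comm]
  -- total sum decomposition
  have hA : ∑ k ∈ Finset.Icc 1 (p - 1), k ^ 7 = p * L + R := by
    rw [hLdef, hRdef, Finset.mul_sum, ← Finset.sum_add_distrib]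
    exact Finset.sum_congr rfl fun k _ => (Nat.div_add_mod (k ^ 7) p).symm
  -- closed form for the power sum, in ℤ
  have hrange : Finset.range p = insert 0 (Finset.Icc 1 (p - 1)) := by
    ext x
    simp only [Finset.mem_range, Finset.mem_insert, Finset.mem_Icc]
    omega
  have hA2 : 24 * ((∑ k ∈ Finset.Icc 1 (p - 1), k ^ 7 : ℕ) : ℤ) =
      ((p : ℤ) - 1) ^ 2 * (p : ℤ) ^ 2 *
        (3 * ((p : ℤ) - 1) ^ 4 + 6 * ((p : ℤ) - 1) ^ 3 - ((p : ℤ) - 1) ^ 2 - 4 * ((p : ℤ) - 1) + 2) := by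
    have h := sum7 (p - 1)
    have hcast : ((p - 1 : ℕ) : ℤ) = (p : ℤ) - 1 := by
      push_cast [Nat.cast_sub (by omega : 1 ≤ p)]; ring
    rw [hcast] at h
    have hps : (p - 1) + 1 = p := by omega
    rw [hps] at h
    have hsum : ∑ k ∈ Finset.range p, (k : ℤ) ^ 7 =
        ((∑ k ∈ Finset.Icc 1 (p - 1), k ^ 7 : ℕ) : ℤ) := by
      rw [hrange, Finset.sum_insert (by simp)]
      push_cast
      simp
    rw [hsum] at h
    linarith [h]
  -- key equation
  have key : (p : ℤ) * (24 * (L : ℤ)) =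
      ((p : ℤ) - 1) ^ 2 * (p : ℤ) ^ 2 *
        (3 * ((p : ℤ) - 1) ^ 4 + 6 * ((p : ℤ) - 1) ^ 3 - ((p : ℤ) - 1) ^ 2 - 4 * ((p : ℤ) - 1) + 2)
      - 12 * (p : ℤ) * ((p : ℤ) - 1) := by
    have h1 : ((p * L + R : ℕ) : ℤ) = (p : ℤ) * L + (R : ℤ) := by push_cast; ring
    have h2 : 24 * ((p : ℤ) * L + (R : ℤ)) =
        ((p : ℤ) - 1) ^ 2 * (p : ℤ) ^ 2 *
        (3 * ((p : ℤ) - 1) ^ 4 + 6 * ((p : ℤ) - 1) ^ 3 - ((p : ℤ) - 1) ^ 2 - 4 * ((p : ℤ) - 1) + 2) := by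
      rw [← h1, ← hA]; exact hA2
    have h3 : 2 * (R : ℤ) = (p : ℤ) * ((p : ℤ) - 1) := by
      have : ((2 * R : ℕ) : ℤ) = ((p * (p - 1) : ℕ) : ℤ) := by rw [hR2]
      push_cast [Nat.cast_sub (by omega : 1 ≤ p)] at this
      linarith
    linarith
  -- conclude
  have hfacts1 : 6 * p ^ 3 ≤ 3 * p ^ 4 := by nlinarith [sq_nonneg p, pow_pos (by omega : 0 < p) 3]
  have hfacts2 : 2 * p ≤ 3 * p ^ 4 - 6 * p ^ 3 + 5 * p ^ 2 := by
    have : 2 * p ≤ 5 * p ^ 2 := by nlinarith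
    omega
  have hM : (p - 2) * (p - 1) * (p + 1) * (3 * p ^ 4 - 6 * p ^ 3 + 5 * p ^ 2 - 2 * p + 6)
      = 24 * L := by
    have hgoal : ((p : ℤ) - 2) * ((p : ℤ) - 1) * ((p : ℤ) + 1) *
        (3 * (p : ℤ) ^ 4 - 6 * (p : ℤ) ^ 3 + 5 * (p : ℤ) ^ 2 - 2 * (p : ℤ) + 6) = 24 * (L : ℤ) := by
      apply mul_left_cancel₀ hp0
      linear_combination -key
    zify [hfacts1, hfacts2, (by omega : 2 ≤ p), (by omega : 1 ≤ p)]
    linear_combination hgoal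
  omega
end
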